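/- arXiv:2512.14468 — 2 statements merged into one kernel-verified Lean document; each statement's English description precedes it below -/
import Mathlib

section
/- Assume 0 < δt ≤ 1/(2L) and that E is bounded below on X. Then lim_{n→∞} dist((0,0), ∂A(u^{n+1}, uⁿ)) = 0; equivalently, there exist ξ^{n+1} ∈ ∂H(u^{n+1}) such that ‖ξ^{n+1} + f(u^{n+1}) + C_M(u^{n+1} − uⁿ)‖ + ‖C_M(u^{n+1} − uⁿ)‖ → 0 as n → ∞. -/
open scoped RealInnerProductSpace
open Filter Topology

lemma hasGradientAt_of_hasFDerivAt' {X : Type*} [NormedAddCommGroup X]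
    [InnerProductSpace ℝ X] [CompleteSpace X] {φ : X → ℝ} {x w : X} {D : X →L[ℝ] ℝ}
    (hD : HasFDerivAt φ D x) (hw : ∀ h, D h = ⟪w, h⟫) : HasGradientAt φ w x := by
  rw [hasGradientAt_iff_hasFDerivAt]
  have : InnerProductSpace.toDual ℝ X w = D :=
    ContinuousLinearMap.ext fun h => by rw [InnerProductSpace.toDual_apply_apply, hw]
  rw [this]; exact hD

lemma descent_lemma' {X : Type*} [NormedAddCommGroup X] [InnerProductSpace ℝ X]
    [CompleteSpace X] (F : X → ℝ) (f : X → X) (L : ℝ)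
    (hF : ∀ x, HasGradientAt F (f x) x)
    (hf : ∀ x y : X, ‖f x - f y‖ ≤ L * ‖x - y‖) (x d : X) :
    F (x + d) ≤ F x + ⟪f x, d⟫ + L / 2 * ‖d‖ ^ 2 := by
  set ψ : ℝ → ℝ := fun t => F (x + t • d) - t * ⟪f x, d⟫ - t ^ 2 * (L / 2 * ‖d‖ ^ 2) with hψdef
  have hφ : ∀ t : ℝ, HasDerivAt (fun s : ℝ => F (x + s • d)) ⟪f (x + t • d), d⟫ t := by
    intro t
    have hc : HasDerivAt (fun s : ℝ => x + s • d) d t := by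
      simpa using ((hasDerivAt_id t).smul_const d).const_add x
    have := (hF (x + t • d)).hasFDerivAt.comp_hasDerivAt t hc
    simpa [InnerProductSpace.toDual_apply_apply, Function.comp_def] using this
  have hψ : ∀ t : ℝ, HasDerivAt ψ
      (⟪f (x + t • d), d⟫ - ⟪f x, d⟫ - 2 * t * (L / 2 * ‖d‖ ^ 2)) t := by
    intro t
    have h1 := (hφ t).sub ((hasDerivAt_id t).mul_const ⟪f x, d⟫)
    have h2 := (hasDerivAt_pow 2 t).mul_const (L / 2 * ‖d‖ ^ 2)
    simpa [hψdef, mul_comm, mul_assoc, mul_left_comm, Pi.sub_def] using h1.sub h2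
  have hanti : AntitoneOn ψ (Set.Icc 0 1) := by
    apply antitoneOn_of_deriv_nonpos (convex_Icc 0 1)
    · exact fun t _ => ((hψ t).continuousAt).continuousWithinAt
    · exact fun t _ => ((hψ t).differentiableAt).differentiableWithinAt
    · intro t ht
      rw [(hψ t).deriv]
      have ht' : 0 ≤ t ∧ t ≤ 1 := by
        rw [interior_Icc] at ht; exact ⟨ht.1.le, ht.2.le⟩
      have hb : ⟪f (x + t • d) - f x, d⟫ ≤ L * t * ‖d‖ ^ 2 := by
        calc ⟪f (x + t • d) - f x, d⟫ ≤ ‖f (x + t • d) - f x‖ * ‖d‖ :=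
              real_inner_le_norm _ _
          _ ≤ (L * ‖(x + t • d) - x‖) * ‖d‖ := by
              gcongr; exact hf _ _
          _ = L * t * ‖d‖ ^ 2 := by
              simp [norm_smul, abs_of_nonneg ht'.1]; ring
      rw [inner_sub_left] at hb
      nlinarith [norm_nonneg d]
  have h01 : (0:ℝ) ∈ Set.Icc (0:ℝ) 1 := by constructor <;> norm_num
  have h11 : (1:ℝ) ∈ Set.Icc (0:ℝ) 1 := by constructor <;> norm_num
  have := hanti h01 h11 zero_le_one
  simp only [hψdef] at this
  simp only [zero_smul, add_zero, one_smul, zero_mul, sub_zero, one_pow, zero_pow,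
    one_mul] at this
  linarith

lemma gradient_Fn' {X : Type*} [NormedAddCommGroup X] [InnerProductSpace ℝ X]
    [CompleteSpace X] (F : X → ℝ) (f : X → X) (hF : ∀ x, HasGradientAt F (f x) x)
    (s : ℝ) (p c a : X) :
    HasGradientAt (fun v => s * ‖v - p‖ ^ 2 - F v - ⟪c, v - p⟫)
      ((2 * s) • (a - p) - f a - c) a := by
  have h1 : HasFDerivAt (fun v : X => ‖v - p‖ ^ 2)
      (2 • (innerSL ℝ (a - p)).comp (ContinuousLinearMap.id ℝ X)) a := by
    have := ((hasFDerivAt_id a).sub_const p).norm_sq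
    simpa using this
  have h1' := h1.const_mul s
  have h2 := (hF a).hasFDerivAt
  have h3 : HasFDerivAt (fun v : X => ⟪c, v - p⟫)
      ((innerSL ℝ c).comp ((ContinuousLinearMap.id ℝ X))) a := by
    have := ((innerSL ℝ c).hasFDerivAt (x := a - p)).comp a ((hasFDerivAt_id a).sub_const p)
    simpa [Function.comp_def] using this
  have hD := (h1'.sub h2).sub h3
  apply hasGradientAt_of_hasFDerivAt' hD
  intro h
  simp [ContinuousLinearMap.sub_apply, ContinuousLinearMap.smul_apply,
    ContinuousLinearMap.comp_apply, innerSL_apply_apply, InnerProductSpace.toDual_apply_apply,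
    inner_sub_left, real_inner_smul_left, two_smul]
  ring

set_option maxHeartbeats 2000000 in
/-- Theorem 3.6(i): `dist((0,0), ∂A(u^{n+1},uⁿ)) → 0`. -/
theorem stmt_7
    {X : Type*} [NormedAddCommGroup X] [InnerProductSpace ℝ X] [FiniteDimensional ℝ X]
    (H F : X → ℝ) (f : X → X) (L δt : ℝ) (M : X →L[ℝ] X)
    (hH : ConvexOn ℝ Set.univ H) (hHcont : Continuous H)
    (hF : ∀ x, HasGradientAt F (f x) x)
    (hL : 0 < L) (hf : ∀ x y : X, ‖f x - f y‖ ≤ L * ‖x - y‖)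
    (hδt : 0 < δt)
    (hMsa : ∀ x y : X, ⟪M x, y⟫ = ⟪x, M y⟫) (hMpsd : ∀ x : X, 0 ≤ ⟪M x, x⟫)
    (u : ℕ → X) (β : ℕ → ℝ) (hβ : ∀ n, β n ∈ Set.Ico (0 : ℝ) 1)
    (y : ℕ → X) (hy : ∀ n, y n = u n + β n • (u n - u (n - 1)))
    (Fn : ℕ → X → ℝ)
    (hFn : ∀ n v, Fn n v = 1 / (4 * δt) * ‖v - u (n - 1)‖ ^ 2 - F v
      - ⟪f (u n) - f (u (n - 1)), v - u (n - 1)⟫)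
    (g : ℕ → X → ℝ)
    (hg : ∀ n v, g n v = H v + 3 / (4 * δt) * ‖v - u n‖ ^ 2
      - ⟪gradient (Fn n) (u n), v⟫ + 1 / 2 * ⟪M (v - y n), v - y n⟫)
    (hmin : ∀ n v, g n (u (n + 1)) ≤ g n v)
    (hδtL : δt ≤ 1 / (2 * L))
    (hEbdd : ∃ B : ℝ, ∀ x : X, B ≤ H x + F x)
    (A : X → X → ℝ)
    (hA : ∀ x z, A x z = (H x + F x) + 1 / (4 * δt) * ‖x - z‖ ^ 2
      + L / 2 * ‖x - z‖ ^ 2 + 1 / 2 * ⟪M (x - z), x - z⟫)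
    (subH : X → Set X)
    (hsubH : ∀ x, subH x = {ξ : X | ∀ z, H x + ⟪ξ, z - x⟫ ≤ H z})
    (CM : X → X)
    (hCM : ∀ v, CM v = (1 / (2 * δt) + L) • v + M v)
    (subA : X → X → Set (X × X))
    (hsubA : ∀ x z, subA x z
      = {p : X × X | ∃ ξ ∈ subH x, p = (ξ + f x + CM (x - z), -CM (x - z))})
    :
    Filter.Tendsto
        (fun n : ℕ => Metric.infDist ((0, 0) : X × X) (subA (u (n + 1)) (u n)))
        Filter.atTop (nhds 0)
      ∧ ∃ ξ : ℕ → X, (∀ n : ℕ, ξ n ∈ subH (u (n + 1))) ∧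
          Filter.Tendsto
            (fun n : ℕ => ‖ξ n + f (u (n + 1)) + CM (u (n + 1) - u n)‖
              + ‖CM (u (n + 1) - u n)‖)
            Filter.atTop (nhds 0) := by
  obtain ⟨B, hB⟩ := hEbdd
  have hLδ : L ≤ 1 / (2 * δt) := by
    rw [le_div_iff₀ (by positivity)] at hδtL ⊢
    nlinarith
  -- abbreviations
  obtain ⟨τ, hτ⟩ : ∃ τ : ℝ, τ = 1 / (4 * δt) := ⟨_, rfl⟩
  have hτ0 : 0 < τ := by rw [hτ]; positivity
  have hLτ : L ≤ 2 * τ := by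
    have h9 : 1 / (2 * δt) = 2 * τ := by rw [hτ]; ring
    linarith
  obtain ⟨d, hd⟩ : ∃ d : ℕ → X, ∀ n, d n = u (n + 1) - u n := ⟨_, fun _ => rfl⟩
  obtain ⟨e, he⟩ : ∃ e : ℕ → X, ∀ n, e n = u n - u (n - 1) := ⟨_, fun _ => rfl⟩
  obtain ⟨w, hw⟩ : ∃ w : ℕ → X, ∀ n,
      w n = (2 * τ) • e n - f (u n) - (f (u n) - f (u (n - 1))) := ⟨_, fun _ => rfl⟩
  -- Step A : gradient of Fn
  have hgrad : ∀ n, gradient (Fn n) (u n) = w n := by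
    intro n
    have hFneq : Fn n = fun v => 1 / (4 * δt) * ‖v - u (n - 1)‖ ^ 2 - F v
        - ⟪f (u n) - f (u (n - 1)), v - u (n - 1)⟫ := funext (hFn n)
    rw [hFneq]
    have := (gradient_Fn' F f hF (1 / (4 * δt)) (u (n - 1)) (f (u n) - f (u (n - 1)))
      (u n)).gradient
    rw [this, hw n, he n, hτ]
  -- quadratic part of g
  obtain ⟨Q, hQ⟩ : ∃ Q : ℕ → X → ℝ, ∀ n v, Q n v = 3 * τ * ‖v - u n‖ ^ 2
      - ⟪w n, v⟫ + 1 / 2 * ⟪M (v - y n), v - y n⟫ := ⟨_, fun _ _ => rfl⟩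
  have hgQ : ∀ n v, g n v = H v + Q n v := by
    intro n v
    rw [hg, hgrad, hQ, hτ]; ring
  -- quadratic expansion
  obtain ⟨qf, hqf⟩ : ∃ qf : X → ℝ, ∀ h : X,
      qf h = 3 * τ * ‖h‖ ^ 2 + 1 / 2 * ⟪M h, h⟫ := ⟨_, fun _ => rfl⟩
  have hqf0 : ∀ h, 0 ≤ qf h := by
    intro h
    rw [hqf]
    have h1 := hMpsd h
    have h2 : 0 ≤ 3 * τ * ‖h‖ ^ 2 := by positivity
    linarith
  obtain ⟨gq, hgq⟩ : ∃ gq : ℕ → X → X, ∀ n x,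
      gq n x = (6 * τ) • (x - u n) - w n + M (x - y n) := ⟨_, fun _ _ => rfl⟩
  have hQexp : ∀ n x h, Q n (x + h) = Q n x + ⟪gq n x, h⟫ + qf h := by
    intro n x h
    have e1 : x + h - u n = x - u n + h := by abel
    have e2 : x + h - y n = x - y n + h := by abel
    have n1 : ‖x - u n + h‖ ^ 2 = ‖x - u n‖ ^ 2 + 2 * ⟪x - u n, h⟫ + ‖h‖ ^ 2 :=
      norm_add_sq_real _ _
    have m1 : ⟪M (x - y n + h), x - y n + h⟫
        = ⟪M (x - y n), x - y n⟫ + 2 * ⟪M (x - y n), h⟫ + ⟪M h, h⟫ := by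
      rw [map_add, inner_add_left, inner_add_right, inner_add_right]
      have : ⟪M h, x - y n⟫ = ⟪M (x - y n), h⟫ := by
        rw [hMsa]; exact real_inner_comm _ _
      rw [this]; ring
    rw [hQ, hQ, hqf, hgq, e1, e2, n1, m1]
    simp only [inner_add_right, inner_add_left, inner_sub_left, real_inner_smul_left]
    ring
  -- the subgradient
  obtain ⟨ξ, hξ⟩ : ∃ ξ : ℕ → X, ∀ n,
      ξ n = w n - (6 * τ) • (u (n + 1) - u n) - M (u (n + 1) - y n) :=
    ⟨_, fun _ => rfl⟩
  have hξgq : ∀ n, gq n (u (n + 1)) = -ξ n := by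
    intro n; rw [hgq, hξ]; abel
  -- Step B : subgradient inequality
  have hxiB : ∀ n z, H (u (n + 1)) + ⟪ξ n, z - u (n + 1)⟫ ≤ H z := by
    intro n z
    set q : ℝ := qf (z - u (n + 1)) with hqdef
    have hq0 : 0 ≤ q := hqf0 _
    have key : ∀ t : ℝ, 0 < t → t ≤ 1 →
        H (u (n + 1)) + ⟪ξ n, z - u (n + 1)⟫ ≤ H z + t * q := by
      intro t ht0 ht1
      have hmin' := hmin n (u (n + 1) + t • (z - u (n + 1)))
      rw [hgQ, hgQ, hQexp] at hmin'
      have hHcv : H (u (n + 1) + t • (z - u (n + 1)))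
          ≤ t * H z + (1 - t) * H (u (n + 1)) := by
        have hcv := hH.2 (Set.mem_univ z) (Set.mem_univ (u (n + 1))) ht0.le
          (by linarith : (0:ℝ) ≤ 1 - t) (by ring)
        have : u (n + 1) + t • (z - u (n + 1)) = t • z + (1 - t) • u (n + 1) := by
          module
        rw [this]; exact hcv
      have hin : ⟪gq n (u (n + 1)), t • (z - u (n + 1))⟫
          = t * (-⟪ξ n, z - u (n + 1)⟫) := by
        rw [hξgq, real_inner_smul_right, inner_neg_left]
      have hqt : qf (t • (z - u (n + 1))) = t ^ 2 * q := by
        rw [hqf, hqdef, hqf, map_smul, norm_smul, real_inner_smul_left,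
          real_inner_smul_right]
        simp [abs_of_pos ht0]
        ring
      rw [hin, hqt] at hmin'
      nlinarith [hmin', hHcv]
    -- take the limit t → 0⁺
    apply le_of_forall_pos_le_add
    intro ε hε
    have ht0 : 0 < min 1 (ε / (q + 1)) := lt_min one_pos (by positivity)
    have := key (min 1 (ε / (q + 1))) ht0 (min_le_left _ _)
    have h2 : min 1 (ε / (q + 1)) * q ≤ ε := by
      have h3 : min 1 (ε / (q + 1)) ≤ ε / (q + 1) := min_le_right _ _
      have : min 1 (ε / (q + 1)) * q ≤ (ε / (q + 1)) * q := by
        apply mul_le_mul_of_nonneg_right h3 hq0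
      have h4 : (ε / (q + 1)) * q ≤ ε := by
        rw [div_mul_eq_mul_div, div_le_iff₀ (by linarith)]
        nlinarith
      linarith
    linarith
  have hxi : ∀ n, ξ n ∈ subH (u (n + 1)) := by
    intro n; rw [hsubH]; exact fun z => hxiB n z
  -- Step C : strong minimality
  have hsm : ∀ n v, g n (u (n + 1)) + qf (v - u (n + 1)) ≤ g n v := by
    intro n v
    have h1 : Q n v = Q n (u (n + 1)) + ⟪gq n (u (n + 1)), v - u (n + 1)⟫
        + qf (v - u (n + 1)) := by
      have := hQexp n (u (n + 1)) (v - u (n + 1))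
      rw [add_sub_cancel] at this
      exact this
    have h2 := hxiB n v
    rw [hgQ, hgQ, h1, hξgq, inner_neg_left]
    linarith
  -- Step D : per-step energy estimate
  have hstepD : ∀ n, (H (u (n + 1)) + F (u (n + 1))) + 2 * τ * ‖d n‖ ^ 2
      + 1 / 2 * ⟪M (d n), d n⟫ + τ * ‖d n‖ ^ 2
      ≤ (H (u n) + F (u n)) + 2 * τ * ‖e n‖ ^ 2 + 1 / 2 * ⟪M (e n), e n⟫ := by
    intro n
    -- (I): from strong minimality at v = u n
    have hI : H (u (n + 1)) - H (u n) ≤ ⟪w n, d n⟫ + β n * ⟪M (e n), d n⟫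
        - 6 * τ * ‖d n‖ ^ 2 - ⟪M (d n), d n⟫ := by
      have h1 := hsm n (u n)
      -- Q n (u (n+1)) = Q n (u n) + ⟪gq n (u n), d n⟫ + qf (d n)
      have h2 : Q n (u (n + 1)) = Q n (u n) + ⟪gq n (u n), d n⟫ + qf (d n) := by
        have := hQexp n (u n) (d n)
        rw [hd] at this ⊢
        rw [add_sub_cancel] at this
        exact this
      have h3 : u n - u (n + 1) = -(d n) := by rw [hd]; abel
      have h4 : qf (-(d n)) = qf (d n) := by
        rw [hqf, hqf, norm_neg, map_neg, inner_neg_neg]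
      rw [hgQ, hgQ, h2, h3, h4] at h1
      have h5 : ⟪gq n (u n), d n⟫ = -⟪w n, d n⟫ - β n * ⟪M (e n), d n⟫ := by
        rw [hgq]
        have : u n - y n = -(β n • e n) := by rw [hy, he]; abel
        rw [this]
        simp only [map_neg, map_smul, sub_self, smul_zero, zero_sub, inner_add_left,
          inner_neg_left, real_inner_smul_left]
        ring
      have h6 : qf (d n) = 3 * τ * ‖d n‖ ^ 2 + 1 / 2 * ⟪M (d n), d n⟫ := hqf _
      rw [h5, h6] at h1
      linarith
    -- (II): descent lemma
    have hII : F (u (n + 1)) + ⟪w n, d n⟫ ≤ F (u n) + L / 2 * ‖d n‖ ^ 2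
        + 2 * τ * ⟪e n, d n⟫ - ⟪f (u n) - f (u (n - 1)), d n⟫ := by
      have hdes := descent_lemma' F f L hF hf (u n) (d n)
      have : u n + d n = u (n + 1) := by rw [hd]; abel
      rw [this] at hdes
      have hwd : ⟪w n, d n⟫ = 2 * τ * ⟪e n, d n⟫ - ⟪f (u n), d n⟫
          - ⟪f (u n) - f (u (n - 1)), d n⟫ := by
        rw [hw, inner_sub_left, inner_sub_left, real_inner_smul_left]
      rw [hwd]
      linarith
    -- bounds
    have hb1 : 2 * τ * ⟪e n, d n⟫
        ≤ τ * ‖e n‖ ^ 2 + τ * ‖d n‖ ^ 2 := by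
      have h1 : ⟪e n, d n⟫ ≤ ‖e n‖ * ‖d n‖ := real_inner_le_norm _ _
      have h2 : ‖e n‖ * ‖d n‖ ≤ (‖e n‖ ^ 2 + ‖d n‖ ^ 2) / 2 := by nlinarith [sq_nonneg (‖e n‖ - ‖d n‖)]
      have h3 : 0 < 2 * τ := by positivity
      calc 2 * τ * ⟪e n, d n⟫ ≤ 2 * τ * ((‖e n‖ ^ 2 + ‖d n‖ ^ 2) / 2) := by
            apply mul_le_mul_of_nonneg_left _ h3.le
            linarith
        _ = τ * ‖e n‖ ^ 2 + τ * ‖d n‖ ^ 2 := by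
            ring
    have hb2 : -⟪f (u n) - f (u (n - 1)), d n⟫
        ≤ τ * ‖e n‖ ^ 2 + τ * ‖d n‖ ^ 2 := by
      have h1 : -⟪f (u n) - f (u (n - 1)), d n⟫ ≤ ‖f (u n) - f (u (n - 1))‖ * ‖d n‖ := by
        have := real_inner_le_norm (-(f (u n) - f (u (n - 1)))) (d n)
        rw [inner_neg_left, norm_neg] at this
        linarith
      have h2 : ‖f (u n) - f (u (n - 1))‖ ≤ L * ‖e n‖ := by rw [he]; exact hf _ _
      have h3 : L * (‖e n‖ * ‖d n‖) ≤ L * ((‖e n‖ ^ 2 + ‖d n‖ ^ 2) / 2) := by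
        apply mul_le_mul_of_nonneg_left _ hL.le
        nlinarith [sq_nonneg (‖e n‖ - ‖d n‖)]
      have h4 : ‖f (u n) - f (u (n - 1))‖ * ‖d n‖ ≤ L * (‖e n‖ * ‖d n‖) := by
        rw [← mul_assoc]
        exact mul_le_mul_of_nonneg_right h2 (norm_nonneg _)
      have h5 : L * ((‖e n‖ ^ 2 + ‖d n‖ ^ 2) / 2)
          ≤ 2 * τ * ((‖e n‖ ^ 2 + ‖d n‖ ^ 2) / 2) := by
        apply mul_le_mul_of_nonneg_right hLτ
        positivity
      have h6 : 2 * τ * ((‖e n‖ ^ 2 + ‖d n‖ ^ 2) / 2)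
          = τ * ‖e n‖ ^ 2 + τ * ‖d n‖ ^ 2 := by
        ring
      linarith
    have hLhalf : L / 2 * ‖d n‖ ^ 2 ≤ τ * ‖d n‖ ^ 2 := by
      have h0 : L / 2 ≤ τ := by linarith
      exact mul_le_mul_of_nonneg_right h0 (sq_nonneg _)
    have hb3 : β n * ⟪M (e n), d n⟫
        ≤ 1 / 2 * ⟪M (e n), e n⟫ + 1 / 2 * ⟪M (d n), d n⟫ := by
      have hβn := hβ n
      have hcross : ⟪M (d n), e n⟫ = ⟪M (e n), d n⟫ := by
        rw [hMsa]; exact real_inner_comm _ _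
      have hpsd := hMpsd (β n • e n - d n)
      simp only [map_sub, map_smul, inner_sub_left, inner_sub_right,
        real_inner_smul_left, real_inner_smul_right] at hpsd
      rw [hcross] at hpsd
      have hMee := hMpsd (e n)
      have h7 : 0 ≤ (1 - β n * β n) * ⟪M (e n), e n⟫ := by
        apply mul_nonneg _ hMee
        nlinarith [hβn.1, hβn.2]
      nlinarith [hpsd, h7]
    linarith [hI, hII, hb1, hb2, hLhalf, hb3]
  -- Step E : convergence of the Lyapunov functional
  obtain ⟨Φ, hΦ⟩ : ∃ Φ : ℕ → ℝ, ∀ n, Φ n = (H (u n) + F (u n))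
      + 2 * τ * ‖e n‖ ^ 2 + 1 / 2 * ⟪M (e n), e n⟫ := ⟨_, fun _ => rfl⟩
  have hen1 : ∀ n, e (n + 1) = d n := by
    intro n; rw [he, hd, Nat.add_sub_cancel]
  have hΦstep : ∀ n, Φ (n + 1) + τ * ‖d n‖ ^ 2 ≤ Φ n := by
    intro n
    rw [hΦ, hΦ, hen1]
    have := hstepD n
    linarith
  have hΦanti : Antitone Φ := by
    apply antitone_nat_of_succ_le
    intro n
    have h1 := hΦstep n
    have h2 : 0 ≤ τ * ‖d n‖ ^ 2 := by positivity
    linarith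
  have hΦbdd : BddBelow (Set.range Φ) := by
    refine ⟨B, ?_⟩
    rintro x ⟨n, rfl⟩
    rw [hΦ]
    have h1 := hB (u n)
    have h2 : 0 ≤ 2 * τ * ‖e n‖ ^ 2 := by positivity
    have h3 := hMpsd (e n)
    linarith
  have hΦconv : Tendsto Φ atTop (𝓝 (⨅ n, Φ n)) := tendsto_atTop_ciInf hΦanti hΦbdd
  have hΦdiff : Tendsto (fun n => Φ n - Φ (n + 1)) atTop (𝓝 0) := by
    have h2 : Tendsto (fun n => Φ (n + 1)) atTop (𝓝 (⨅ n, Φ n)) :=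
      (tendsto_add_atTop_iff_nat 1).mpr hΦconv
    have := hΦconv.sub h2
    simpa using this
  have hd2 : Tendsto (fun n => ‖d n‖ ^ 2) atTop (𝓝 0) := by
    apply squeeze_zero (fun n => sq_nonneg _) (g := fun n => (1 / τ) * (Φ n - Φ (n + 1)))
    · intro n
      have h1 : τ * ‖d n‖ ^ 2 ≤ Φ n - Φ (n + 1) := by linarith [hΦstep n]
      have h2 : ‖d n‖ ^ 2 = (1 / τ) * (τ * ‖d n‖ ^ 2) := by
        field_simp
      rw [h2]
      exact mul_le_mul_of_nonneg_left h1 (by positivity)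
    · have := hΦdiff.const_mul (1 / τ)
      simpa using this
  have hd0 : Tendsto (fun n => ‖d n‖) atTop (𝓝 0) := by
    have h1 : Tendsto (fun n => Real.sqrt (‖d n‖ ^ 2)) atTop (𝓝 (Real.sqrt 0)) :=
      (Real.continuous_sqrt.tendsto 0).comp hd2
    simpa [Real.sqrt_sq (norm_nonneg _)] using h1
  have he0 : Tendsto (fun n => ‖e n‖) atTop (𝓝 0) := by
    rw [← tendsto_add_atTop_iff_nat 1]
    have : (fun n => ‖e (n + 1)‖) = fun n => ‖d n‖ := by
      funext n; rw [hen1]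
    rw [this]
    exact hd0
  -- Step F : norm bounds
  obtain ⟨vec, hvec⟩ : ∃ vec : ℕ → X, ∀ n,
      vec n = ξ n + f (u (n + 1)) + CM (u (n + 1) - u n) := ⟨_, fun _ => rfl⟩
  have hvec_eq : ∀ n, vec n = (1 / (2 * δt)) • e n + (f (u (n + 1)) - f (u n))
      + (f (u (n - 1)) - f (u n)) + (L - 1 / δt) • d n + β n • M (e n) := by
    intro n
    have hdy : u (n + 1) - y n = d n - β n • e n := by
      rw [hy, hd, he]; abel
    rw [hvec, hξ, hw, hCM, ← hd, hdy, map_sub, map_smul, hτ]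
    have h2δ : (1 / (2 * δt) : ℝ) = 2 * (1 / (4 * δt)) := by ring
    rw [h2δ]
    module
  have hC1 : ∀ n, ‖vec n‖ ≤ (1 / δt + 2 * L) * ‖d n‖
      + (1 / (2 * δt) + L + ‖M‖) * ‖e n‖ := by
    intro n
    rw [hvec_eq]
    have h1 : ‖(1 / (2 * δt)) • e n‖ = 1 / (2 * δt) * ‖e n‖ := by
      rw [norm_smul, Real.norm_eq_abs, abs_of_pos (by positivity)]
    have h2 : ‖f (u (n + 1)) - f (u n)‖ ≤ L * ‖d n‖ := by rw [hd]; exact hf _ _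
    have h3 : ‖f (u (n - 1)) - f (u n)‖ ≤ L * ‖e n‖ := by
      calc ‖f (u (n - 1)) - f (u n)‖ ≤ L * ‖u (n - 1) - u n‖ := hf _ _
        _ = L * ‖e n‖ := by rw [he, norm_sub_rev]
    have h4 : ‖(L - 1 / δt) • d n‖ ≤ (L + 1 / δt) * ‖d n‖ := by
      rw [norm_smul, Real.norm_eq_abs]
      apply mul_le_mul_of_nonneg_right _ (norm_nonneg _)
      rw [abs_le]
      constructor <;> [nlinarith [one_div_pos.mpr hδt]; nlinarith [one_div_pos.mpr hδt]]
    have h5 : ‖β n • M (e n)‖ ≤ ‖M‖ * ‖e n‖ := by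
      rw [norm_smul, Real.norm_eq_abs, abs_of_nonneg (hβ n).1]
      calc β n * ‖M (e n)‖ ≤ 1 * ‖M (e n)‖ :=
            mul_le_mul_of_nonneg_right (hβ n).2.le (norm_nonneg _)
        _ = ‖M (e n)‖ := one_mul _
        _ ≤ ‖M‖ * ‖e n‖ := M.le_opNorm _
    calc ‖(1 / (2 * δt)) • e n + (f (u (n + 1)) - f (u n))
          + (f (u (n - 1)) - f (u n)) + (L - 1 / δt) • d n + β n • M (e n)‖
        ≤ ‖(1 / (2 * δt)) • e n‖ + ‖f (u (n + 1)) - f (u n)‖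
          + ‖f (u (n - 1)) - f (u n)‖ + ‖(L - 1 / δt) • d n‖ + ‖β n • M (e n)‖ := by
          refine le_trans (norm_add_le _ _) ?_
          gcongr
          refine le_trans (norm_add_le _ _) ?_
          gcongr
          refine le_trans (norm_add_le _ _) ?_
          gcongr
          exact norm_add_le _ _
      _ ≤ (1 / δt + 2 * L) * ‖d n‖ + (1 / (2 * δt) + L + ‖M‖) * ‖e n‖ := by
          rw [h1]
          nlinarith [h2, h3, h4, h5, norm_nonneg (d n), norm_nonneg (e n)]
  have hC3 : ∀ n, ‖CM (u (n + 1) - u n)‖ ≤ (1 / (2 * δt) + L + ‖M‖) * ‖d n‖ := by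
    intro n
    rw [hCM, ← hd]
    calc ‖(1 / (2 * δt) + L) • d n + M (d n)‖
        ≤ ‖(1 / (2 * δt) + L) • d n‖ + ‖M (d n)‖ := norm_add_le _ _
      _ ≤ (1 / (2 * δt) + L) * ‖d n‖ + ‖M‖ * ‖d n‖ := by
          rw [norm_smul, Real.norm_eq_abs, abs_of_pos (by positivity)]
          gcongr
          exact M.le_opNorm _
      _ = (1 / (2 * δt) + L + ‖M‖) * ‖d n‖ := by ring
  -- the dominating sequence
  obtain ⟨G, hG⟩ : ∃ G : ℕ → ℝ, ∀ n, G n = (1 / δt + 2 * L + 1 / (2 * δt) + L + ‖M‖) * ‖d n‖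
      + (1 / (2 * δt) + L + ‖M‖) * ‖e n‖ := ⟨_, fun _ => rfl⟩
  have hG0 : Tendsto G atTop (𝓝 0) := by
    have h1 := hd0.const_mul (1 / δt + 2 * L + 1 / (2 * δt) + L + ‖M‖)
    have h2 := he0.const_mul (1 / (2 * δt) + L + ‖M‖)
    have := h1.add h2
    simp only [mul_zero, add_zero] at this
    have heq : G = fun n => (1 / δt + 2 * L + 1 / (2 * δt) + L + ‖M‖) * ‖d n‖
        + (1 / (2 * δt) + L + ‖M‖) * ‖e n‖ := funext hG
    rw [heq]
    exact this
  have hSG : ∀ n, ‖vec n‖ + ‖CM (u (n + 1) - u n)‖ ≤ G n := by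
    intro n
    rw [hG]
    have := hC1 n
    have := hC3 n
    nlinarith [norm_nonneg (d n), norm_nonneg (e n)]
  constructor
  · -- infDist part
    apply squeeze_zero (fun n => Metric.infDist_nonneg) (g := G)
    · intro n
      have hmem : (vec n, -CM (u (n + 1) - u n)) ∈ subA (u (n + 1)) (u n) := by
        rw [hsubA]
        exact ⟨ξ n, hxi n, by rw [hvec]⟩
      have h1 := Metric.infDist_le_dist_of_mem (x := ((0, 0) : X × X)) hmem
      have h2 : dist ((0, 0) : X × X) (vec n, -CM (u (n + 1) - u n))
          ≤ ‖vec n‖ + ‖CM (u (n + 1) - u n)‖ := by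
        rw [Prod.dist_eq]
        simp only [dist_zero_left, norm_neg]
        exact max_le (le_add_of_nonneg_right (norm_nonneg _))
          (le_add_of_nonneg_left (norm_nonneg _))
      exact le_trans h1 (le_trans h2 (hSG n))
    · exact hG0
  · refine ⟨ξ, hxi, ?_⟩
    apply squeeze_zero (fun n => by positivity) (g := G)
    · intro n
      have := hSG n
      rw [hvec] at this
      exact this
    · exact hG0
end

section
/- Assume 0 < δt ≤ 1/(2L), E is bounded below and level-bounded, and A is a KL function. Then the sequence (uⁿ) generated by the BapDCA_e algorithm has finite length, Σ_{n=0}^{∞} ‖u^{n+1} − uⁿ‖ < ∞, and (uⁿ) converges to a point ū that is a critical point of E, i.e., −∇F(ū) ∈ ∂H(ū). -/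
open scoped RealInnerProductSpace
open Filter Topology InnerProductSpace

section AuxLemmas

variable {X : Type*} [NormedAddCommGroup X] [InnerProductSpace ℝ X] [CompleteSpace X]

lemma aux_grad_Fn (c : ℝ) (a b : X) (F : X → ℝ) (fx : X) (x : X) (hF : HasGradientAt F fx x) :
    HasGradientAt (fun v => c * ‖v - a‖ ^ 2 - F v - ⟪b, v - a⟫) ((2 * c) • (x - a) - fx - b) x := by
  have hid : HasFDerivAt (fun v : X => v - a) (ContinuousLinearMap.id ℝ X) x :=
    (hasFDerivAt_id x).sub_const a
  have h1 : HasFDerivAt (fun v : X => ⟪v - a, v - a⟫)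
      ((fderivInnerCLM ℝ (x - a, x - a)).comp
        ((ContinuousLinearMap.id ℝ X).prod (ContinuousLinearMap.id ℝ X))) x :=
    hid.inner ℝ hid
  have h2 : HasFDerivAt (fun v : X => ⟪b, v - a⟫)
      ((fderivInnerCLM ℝ ((b : X), x - a)).comp
        ((0 : X →L[ℝ] X).prod (ContinuousLinearMap.id ℝ X))) x :=
    (hasFDerivAt_const b x).inner ℝ hid
  have h3 := ((h1.const_mul c).sub hF.hasFDerivAt).sub h2
  have heq : (fun v : X => c * ⟪v - a, v - a⟫ - F v - ⟪b, v - a⟫)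
      = (fun v : X => c * ‖v - a‖ ^ 2 - F v - ⟪b, v - a⟫) := by
    funext v; rw [real_inner_self_eq_norm_sq]
  have h3 := (show HasFDerivAt (fun v : X => c * ⟪v - a, v - a⟫ - F v - ⟪b, v - a⟫) _ x from h3)
  rw [heq] at h3
  rw [hasGradientAt_iff_hasFDerivAt]
  refine h3.congr_fderiv ?_
  apply ContinuousLinearMap.ext
  intro h
  simp [fderivInnerCLM_apply, real_inner_smul_left, inner_sub_left, real_inner_comm (x - a) h]
  ring

variable {X : Type*} [NormedAddCommGroup X] [InnerProductSpace ℝ X] [CompleteSpace X]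

lemma aux_pos_lin {c0 r : ℝ} (hr : 0 ≤ r)
    (key : ∀ t : ℝ, 0 < t → t ≤ 1 → 0 ≤ t * c0 + t ^ 2 * r) : 0 ≤ c0 := by
  by_contra hneg
  push_neg at hneg
  have ht0 : 0 < min 1 (-c0 / (2 * (r + 1))) :=
    lt_min one_pos (div_pos (by linarith) (by linarith))
  have ht1 : min 1 (-c0 / (2 * (r + 1))) ≤ 1 := min_le_left _ _
  obtain ⟨t, htdef⟩ : ∃ t : ℝ, t = min 1 (-c0 / (2 * (r + 1))) := ⟨_, rfl⟩
  rw [← htdef] at ht0 ht1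
  have hthis := key t ht0 ht1
  have htr : t * r ≤ -c0 / 2 := by
    have h2 : t ≤ -c0 / (2 * (r + 1)) := htdef ▸ min_le_right _ _
    calc t * r ≤ (-c0 / (2 * (r + 1))) * r := mul_le_mul_of_nonneg_right h2 hr
      _ ≤ -c0 / 2 := by
        rw [div_mul_eq_mul_div, div_le_div_iff₀ (by linarith) (by norm_num)]
        nlinarith
  have h3 : t ^ 2 * r = t * (t * r) := by ring
  have h4 : t * (t * r) ≤ t * (-c0 / 2) := mul_le_mul_of_nonneg_left htr ht0.le
  have h5 : 0 ≤ t * c0 + t * (-c0 / 2) := by linarith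
  have h6 : t * c0 + t * (-c0 / 2) = t * (c0 / 2) := by ring
  have h7 : t * (c0 / 2) < 0 := mul_neg_of_pos_of_neg ht0 (by linarith)
  linarith

/-- First-order optimality for minimizers of `H + quadratic`. -/
lemma aux_opt (H : X → ℝ) (hH : ConvexOn ℝ Set.univ H) (M : X →L[ℝ] X)
    (hMsa : ∀ x y : X, ⟪M x, y⟫ = ⟪x, M y⟫) (hMpsd : ∀ x : X, 0 ≤ ⟪M x, x⟫)
    (c3 : ℝ) (hc3 : 0 ≤ c3) (w yn a p : X)
    (hp : ∀ v, H p + c3 * ‖p - a‖ ^ 2 - ⟪w, p⟫ + 1 / 2 * ⟪M (p - yn), p - yn⟫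
      ≤ H v + c3 * ‖v - a‖ ^ 2 - ⟪w, v⟫ + 1 / 2 * ⟪M (v - yn), v - yn⟫) :
    ∀ z, H p + ⟪w - (2 * c3) • (p - a) - M (p - yn), z - p⟫ ≤ H z := by
  intro z
  set G : X := (2 * c3) • (p - a) - w + M (p - yn) with hG
  have key : ∀ t : ℝ, 0 < t → t ≤ 1 →
      0 ≤ t * (H z - H p + ⟪G, z - p⟫) + t ^ 2 * (c3 * ‖z - p‖ ^ 2 + 1 / 2 * ⟪M (z - p), z - p⟫) := by
    intro t ht0 ht1
    set zt : X := p + t • (z - p) with hzt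
    have hconv : H zt ≤ H p + t * (H z - H p) := by
      have := hH.2 (Set.mem_univ p) (Set.mem_univ z)
        (by linarith : (0:ℝ) ≤ 1 - t) (by linarith : (0:ℝ) ≤ t) (by ring)
      have hz : (1 - t) • p + t • z = zt := by rw [hzt]; module
      rw [hz] at this
      have : H zt ≤ (1 - t) * H p + t * H z := by simpa using this
      linarith
    -- quadratic expansion
    have hq : c3 * ‖zt - a‖ ^ 2 - ⟪w, zt⟫ + 1 / 2 * ⟪M (zt - yn), zt - yn⟫
        = (c3 * ‖p - a‖ ^ 2 - ⟪w, p⟫ + 1 / 2 * ⟪M (p - yn), p - yn⟫)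
          + t * ⟪G, z - p⟫
          + t ^ 2 * (c3 * ‖z - p‖ ^ 2 + 1 / 2 * ⟪M (z - p), z - p⟫) := by
      have e1 : zt - a = (p - a) + t • (z - p) := by rw [hzt]; abel
      have e2 : zt - yn = (p - yn) + t • (z - p) := by rw [hzt]; abel
      have n1 : ‖(p - a) + t • (z - p)‖ ^ 2
          = ‖p - a‖ ^ 2 + 2 * (t * ⟪p - a, z - p⟫) + t ^ 2 * ‖z - p‖ ^ 2 := by
        rw [← real_inner_self_eq_norm_sq, ← real_inner_self_eq_norm_sq,
          ← real_inner_self_eq_norm_sq]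
        simp only [inner_add_add_self, real_inner_smul_left, real_inner_smul_right,
          real_inner_comm (p - a) (z - p)]
        ring
      have n2 : ⟪M ((p - yn) + t • (z - p)), (p - yn) + t • (z - p)⟫
          = ⟪M (p - yn), p - yn⟫ + 2 * (t * ⟪M (p - yn), z - p⟫)
            + t ^ 2 * ⟪M (z - p), z - p⟫ := by
        have hsym : ⟪M (z - p), p - yn⟫ = ⟪M (p - yn), z - p⟫ := by
          rw [hMsa]; exact real_inner_comm _ _
        simp only [map_add, map_smul, inner_add_left, inner_add_right,
          real_inner_smul_left, real_inner_smul_right, hsym]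
        ring
      have n3 : ⟪w, zt⟫ = ⟪w, p⟫ + t * ⟪w, z - p⟫ := by
        rw [hzt, inner_add_right, real_inner_smul_right]
      rw [e1, e2, n1, n2, n3, hG]
      simp only [inner_sub_left, inner_add_left, real_inner_smul_left]
      ring
    linarith [hp zt, hq, hconv]
  -- conclude the linear term is nonnegative
  have hr : 0 ≤ c3 * ‖z - p‖ ^ 2 + 1 / 2 * ⟪M (z - p), z - p⟫ := by
    have := hMpsd (z - p); positivity
  have hc0nn : 0 ≤ H z - H p + ⟪G, z - p⟫ := aux_pos_lin hr key
  have heq : w - (2 * c3) • (p - a) - M (p - yn) = -G := by rw [hG]; abel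
  rw [heq, inner_neg_left]
  linarith


/-- Descent lemma for a function with `L`-Lipschitz gradient. -/
lemma aux_descent (F : X → ℝ) (f : X → X) (L : ℝ) (hL : 0 ≤ L)
    (hF : ∀ x, HasGradientAt F (f x) x)
    (hf : ∀ x y : X, ‖f x - f y‖ ≤ L * ‖x - y‖) (x d : X) :
    F (x + d) ≤ F x + ⟪f x, d⟫ + L / 2 * ‖d‖ ^ 2 := by
  set φ : ℝ → ℝ := fun t => F (x + t • d) - t * ⟪f x, d⟫ - t ^ 2 * (L / 2) * ‖d‖ ^ 2 with hφ
  have hderiv : ∀ t : ℝ, HasDerivAt φ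
      (⟪f (x + t • d), d⟫ - ⟪f x, d⟫ - t * L * ‖d‖ ^ 2) t := by
    intro t
    have hline : HasDerivAt (fun t : ℝ => x + t • d) d t := by
      simpa using ((hasDerivAt_id t).smul_const d).const_add x
    have hcomp : HasDerivAt (fun t : ℝ => F (x + t • d)) (⟪f (x + t • d), d⟫) t := by
      have h := (hF (x + t • d)).hasFDerivAt.comp_hasDerivAt t hline
      simpa [InnerProductSpace.toDual_apply_apply, Function.comp_def] using h
    have h2 : HasDerivAt (fun t : ℝ => t * ⟪f x, d⟫) (⟪f x, d⟫) t := by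
      simpa using (hasDerivAt_id t).mul_const (⟪f x, d⟫)
    have h3 : HasDerivAt (fun t : ℝ => t ^ 2 * (L / 2) * ‖d‖ ^ 2)
        (2 * t * (L / 2) * ‖d‖ ^ 2) t := by
      have := ((hasDerivAt_pow 2 t).mul_const (L / 2)).mul_const (‖d‖ ^ 2)
      simpa [pow_one] using this
    have : HasDerivAt φ (⟪f (x + t • d), d⟫ - ⟪f x, d⟫ - 2 * t * (L / 2) * ‖d‖ ^ 2) t :=
      (hcomp.sub h2).sub h3
    convert this using 1
    ring
  have hanti : AntitoneOn φ (Set.Icc 0 1) := by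
    apply antitoneOn_of_deriv_nonpos (convex_Icc 0 1)
    · exact (fun t _ => ((hderiv t).differentiableAt.continuousAt.continuousWithinAt))
    · intro t ht
      exact (hderiv t).differentiableAt.differentiableWithinAt
    · intro t ht
      rw [interior_Icc] at ht
      rw [(hderiv t).deriv]
      have h1 : ⟪f (x + t • d) - f x, d⟫ ≤ L * t * ‖d‖ ^ 2 := by
        calc ⟪f (x + t • d) - f x, d⟫ ≤ ‖f (x + t • d) - f x‖ * ‖d‖ := real_inner_le_norm _ _
          _ ≤ L * ‖(x + t • d) - x‖ * ‖d‖ := by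
              apply mul_le_mul_of_nonneg_right (hf _ _) (norm_nonneg _)
          _ = L * t * ‖d‖ ^ 2 := by
              simp [norm_smul, abs_of_pos ht.1]
              ring
      rw [inner_sub_left] at h1
      linarith
  have h01 := hanti (Set.mem_Icc.2 ⟨le_refl 0, zero_le_one⟩) (Set.mem_Icc.2 ⟨zero_le_one, le_refl 1⟩) zero_le_one
  simp only [hφ] at h01
  simp at h01
  linarith

/-- Tangent line inequality for concave functions. -/
lemma aux_concave_tangent (ν : ℝ) (ψ : ℝ → ℝ) (hconc : ConcaveOn ℝ (Set.Ico 0 ν) ψ)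
    {x : ℝ} (hx : x ∈ Set.Ioo 0 ν) {p : ℝ} (hd : HasDerivAt ψ p x)
    {z : ℝ} (hz : z ∈ Set.Ico 0 ν) : ψ z - ψ x ≤ p * (z - x) := by
  rcases eq_or_ne z x with rfl | hne
  · simp
  have hslope : Tendsto (fun t : ℝ => (ψ (x + t * (z - x)) - ψ x) / t) (𝓝[>] (0:ℝ))
      (𝓝 (p * (z - x))) := by
    have hline : HasDerivAt (fun t : ℝ => x + t * (z - x)) (z - x) 0 := by
      simpa using ((hasDerivAt_id (0:ℝ)).mul_const (z - x)).const_add x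
    have hd' : HasDerivAt ψ p ((fun t : ℝ => x + t * (z - x)) 0) := by simpa using hd
    have hcomp : HasDerivAt (fun t : ℝ => ψ (x + t * (z - x))) (p * (z - x)) 0 := by
      have := hd'.comp 0 hline
      simpa [Function.comp_def] using this
    have h2 := hcomp.hasDerivWithinAt (s := Set.Ioi (0:ℝ))
    rw [hasDerivWithinAt_iff_tendsto_slope] at h2
    have hsub : Set.Ioi (0:ℝ) \ {0} = Set.Ioi (0:ℝ) := by
      exact Set.diff_singleton_eq_self (by simp)
    rw [hsub] at h2
    refine h2.congr (fun t => ?_)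
    rw [slope_def_field]
    simp [div_eq_div_iff]
  have hcb : ∀ᶠ t in 𝓝[>] (0:ℝ), ψ z - ψ x ≤ (ψ (x + t * (z - x)) - ψ x) / t := by
    filter_upwards [Ioo_mem_nhdsGT_of_mem (Set.mem_Ico.2 ⟨le_refl (0:ℝ), zero_lt_one⟩)] with t ht
    have hxm : x ∈ Set.Ico 0 ν := ⟨hx.1.le, hx.2⟩
    have hcc := hconc.2 hxm hz (by linarith [ht.2] : (0:ℝ) ≤ 1 - t) ht.1.le (by ring)
    have hpt : (1 - t) • x + t • z = x + t * (z - x) := by simp; ring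
    rw [hpt] at hcc
    have : ψ x + t * (ψ z - ψ x) ≤ ψ (x + t * (z - x)) := by
      have : (1 - t) * ψ x + t * ψ z = ψ x + t * (ψ z - ψ x) := by ring
      simpa [this] using hcc
    rw [le_div_iff₀ ht.1]
    linarith
  have := ge_of_tendsto hslope hcb
  linarith

lemma aux_am_gm {a x y : ℝ} (ha : 0 ≤ a) (hx : 0 ≤ x) (hy : 0 ≤ y) (h : a ^ 2 ≤ x * y) :
    a ≤ (x + y) / 2 := by nlinarith [sq_nonneg (x - y)]


lemma aux_psdCS (M : X →L[ℝ] X)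
    (hMsa : ∀ x y : X, ⟪M x, y⟫ = ⟪x, M y⟫) (hMpsd : ∀ x : X, 0 ≤ ⟪M x, x⟫)
    (e d : X) : ⟪M e, d⟫ ≤ 1 / 2 * ⟪M e, e⟫ + 1 / 2 * ⟪M d, d⟫ := by
  have h := hMpsd (e - d)
  have hexp : ⟪M (e - d), e - d⟫ = ⟪M e, e⟫ - 2 * ⟪M e, d⟫ + ⟪M d, d⟫ := by
    have hsym : ⟪M d, e⟫ = ⟪M e, d⟫ := by rw [hMsa]; exact real_inner_comm _ _
    simp only [map_sub, inner_sub_left, inner_sub_right, hsym]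
    ring
  linarith [hexp ▸ h]


end AuxLemmas

set_option maxHeartbeats 4000000 in
/-- Theorem 3.6(iii): finite length and global convergence of the BapDCA_e iterates to a critical point of `E`, under the KL property of `A`. -/
theorem stmt_9
    {X : Type*} [NormedAddCommGroup X] [InnerProductSpace ℝ X] [FiniteDimensional ℝ X]
    (H F : X → ℝ) (f : X → X) (L δt : ℝ) (M : X →L[ℝ] X)
    (hH : ConvexOn ℝ Set.univ H) (hHcont : Continuous H)
    (hF : ∀ x, HasGradientAt F (f x) x)
    (hL : 0 < L) (hf : ∀ x y : X, ‖f x - f y‖ ≤ L * ‖x - y‖)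
    (hδt : 0 < δt)
    (hMsa : ∀ x y : X, ⟪M x, y⟫ = ⟪x, M y⟫) (hMpsd : ∀ x : X, 0 ≤ ⟪M x, x⟫)
    (u : ℕ → X) (β : ℕ → ℝ) (hβ : ∀ n, β n ∈ Set.Ico (0 : ℝ) 1)
    (y : ℕ → X) (hy : ∀ n, y n = u n + β n • (u n - u (n - 1)))
    (Fn : ℕ → X → ℝ)
    (hFn : ∀ n v, Fn n v = 1 / (4 * δt) * ‖v - u (n - 1)‖ ^ 2 - F v
      - ⟪f (u n) - f (u (n - 1)), v - u (n - 1)⟫)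
    (g : ℕ → X → ℝ)
    (hg : ∀ n v, g n v = H v + 3 / (4 * δt) * ‖v - u n‖ ^ 2
      - ⟪gradient (Fn n) (u n), v⟫ + 1 / 2 * ⟪M (v - y n), v - y n⟫)
    (hmin : ∀ n v, g n (u (n + 1)) ≤ g n v)
    (hδtL : δt ≤ 1 / (2 * L))
    (hEbdd : ∃ B : ℝ, ∀ x : X, B ≤ H x + F x)
    (hlev : ∀ a : ℝ, Bornology.IsBounded {x : X | H x + F x ≤ a})
    (A : X → X → ℝ)
    (hA : ∀ x z, A x z = (H x + F x) + 1 / (4 * δt) * ‖x - z‖ ^ 2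
      + L / 2 * ‖x - z‖ ^ 2 + 1 / 2 * ⟪M (x - z), x - z⟫)
    (subH : X → Set X)
    (hsubH : ∀ x, subH x = {ξ : X | ∀ z, H x + ⟪ξ, z - x⟫ ≤ H z})
    (CM : X → X)
    (hCM : ∀ v, CM v = (1 / (2 * δt) + L) • v + M v)
    (subA : X → X → Set (X × X))
    (hsubA : ∀ x z, subA x z
      = {p : X × X | ∃ ξ ∈ subH x, p = (ξ + f x + CM (x - z), -CM (x - z))})
    (hKL : ∀ xb yb : X, (0, 0) ∈ subA xb yb →
      ∃ ν : ℝ, 0 < ν ∧ ∃ O : Set (X × X), IsOpen O ∧ (xb, yb) ∈ O ∧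
        ∃ ψ ψ' : ℝ → ℝ, ContinuousOn ψ (Set.Ico 0 ν) ∧ ψ 0 = 0 ∧
          ConcaveOn ℝ (Set.Ico 0 ν) ψ ∧
          (∀ s ∈ Set.Ioo 0 ν, HasDerivAt ψ (ψ' s) s ∧ 0 < ψ' s) ∧
          ∀ x z : X, (x, z) ∈ O → A xb yb < A x z → A x z < A xb yb + ν →
            1 ≤ ψ' (A x z - A xb yb) * Metric.infDist ((0, 0) : X × X) (subA x z))
    :
    Summable (fun n : ℕ => ‖u (n + 1) - u n‖)
      ∧ ∃ ub : X, Filter.Tendsto u Filter.atTop (nhds ub)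
        ∧ ∀ z : X, H ub + ⟪-(f ub), z - ub⟫ ≤ H z := by
  -- ### Setup
  obtain ⟨γ, hγdef⟩ : ∃ γ : ℝ, γ = 1 / (4 * δt) := ⟨_, rfl⟩
  have hγ : 0 < γ := by rw [hγdef]; positivity
  have hLγ : L ≤ 2 * γ := by
    rw [hγdef]
    rw [le_div_iff₀ (by positivity)] at hδtL
    rw [mul_one_div, le_div_iff₀ (by positivity)]
    nlinarith
  have hfc : Continuous f := by
    have : LipschitzWith (Real.toNNReal L) f := by
      apply LipschitzWith.of_dist_le_mul
      intro x z
      rw [dist_eq_norm, dist_eq_norm]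
      calc ‖f x - f z‖ ≤ L * ‖x - z‖ := hf x z
        _ ≤ Real.toNNReal L * ‖x - z‖ := by
            apply mul_le_mul_of_nonneg_right _ (norm_nonneg _)
            exact (Real.le_coe_toNNReal L)
    exact this.continuous
  have hFc : Continuous F := by
    apply continuous_iff_continuousAt.2
    intro x
    exact ((hF x).differentiableAt).continuousAt
  obtain ⟨Dn, hDn⟩ : ∃ Dn : ℕ → ℝ, ∀ n, Dn n = ‖u (n + 1) - u n‖ := ⟨_, fun _ => rfl⟩
  obtain ⟨sn, hsn⟩ : ∃ sn : ℕ → ℝ, ∀ n, sn n = ‖u n - u (n - 1)‖ := ⟨_, fun _ => rfl⟩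
  obtain ⟨av, hav⟩ : ∃ av : ℕ → ℝ, ∀ n, av n = A (u n) (u (n - 1)) := ⟨_, fun _ => rfl⟩
  obtain ⟨Ξ, hΞdef⟩ : ∃ Ξ : ℕ → X, ∀ n, Ξ n = gradient (Fn n) (u n)
      - (2 * (3 / (4 * δt))) • (u (n + 1) - u n) - M (u (n + 1) - y n) := ⟨_, fun _ => rfl⟩
  have hDn0 : ∀ n, 0 ≤ Dn n := fun n => (hDn n) ▸ norm_nonneg _
  have hsn0 : ∀ n, 0 ≤ sn n := fun n => (hsn n) ▸ norm_nonneg _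
  have hsn_succ : ∀ n, sn (n + 1) = Dn n := by
    intro n; rw [hsn, hDn, Nat.add_sub_cancel]
  -- ### Gradient of Fn
  have hw : ∀ n, gradient (Fn n) (u n)
      = (2 * (1 / (4 * δt))) • (u n - u (n - 1)) - f (u n) - (f (u n) - f (u (n - 1))) := by
    intro n
    have hfun : Fn n = fun v => 1 / (4 * δt) * ‖v - u (n - 1)‖ ^ 2 - F v
        - ⟪f (u n) - f (u (n - 1)), v - u (n - 1)⟫ := funext (hFn n)
    rw [hfun]
    exact (aux_grad_Fn (1 / (4 * δt)) (u (n - 1)) (f (u n) - f (u (n - 1))) F (f (u n))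
      (u n) (hF (u n))).gradient
  -- ### First-order optimality of the iterates
  have hxi : ∀ n z, H (u (n + 1)) + ⟪Ξ n, z - u (n + 1)⟫ ≤ H z := by
    intro n z
    have hmin' : ∀ v, H (u (n + 1)) + 3 / (4 * δt) * ‖u (n + 1) - u n‖ ^ 2
        - ⟪gradient (Fn n) (u n), u (n + 1)⟫
        + 1 / 2 * ⟪M (u (n + 1) - y n), u (n + 1) - y n⟫
        ≤ H v + 3 / (4 * δt) * ‖v - u n‖ ^ 2 - ⟪gradient (Fn n) (u n), v⟫
        + 1 / 2 * ⟪M (v - y n), v - y n⟫ := by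
      intro v
      have := hmin n v
      rw [hg n v, hg n (u (n + 1))] at this
      exact this
    have := aux_opt H hH M hMsa hMpsd (3 / (4 * δt)) (by positivity)
      (gradient (Fn n) (u n)) (y n) (u n) (u (n + 1)) hmin' z
    rw [hΞdef]
    exact this
  -- ### Sufficient decrease
  have hdec : ∀ n, av (n + 1) + γ * Dn n ^ 2 ≤ av n := by
    intro n
    obtain ⟨dd, hdd⟩ : ∃ v : X, v = u (n + 1) - u n := ⟨_, rfl⟩
    obtain ⟨ee, hee⟩ : ∃ v : X, v = u n - u (n - 1) := ⟨_, rfl⟩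
    have hy' : u (n + 1) - y n = dd - β n • ee := by
      rw [hy n, hdd, hee]; module
    have hΞ : Ξ n = (2 * γ) • ee - f (u n) - (f (u n) - f (u (n - 1)))
        - (6 * γ) • dd - (M dd - β n • M ee) := by
      rw [hΞdef, hw, hy', map_sub, map_smul, ← hdd, ← hee, hγdef]
      module
    have hΞd : ⟪Ξ n, dd⟫ = 2 * γ * ⟪ee, dd⟫ - ⟪f (u n), dd⟫
        - (⟪f (u n), dd⟫ - ⟪f (u (n - 1)), dd⟫) - 6 * γ * ‖dd‖ ^ 2
        - ⟪M dd, dd⟫ + β n * ⟪M ee, dd⟫ := by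
      rw [hΞ]
      simp only [inner_sub_left, real_inner_smul_left, real_inner_self_eq_norm_sq]
      ring
    -- bounds
    have hb1 : 2 * γ * ⟪ee, dd⟫ ≤ γ * ‖ee‖ ^ 2 + γ * ‖dd‖ ^ 2 := by
      nlinarith [real_inner_le_norm ee dd, sq_nonneg (‖ee‖ - ‖dd‖), norm_nonneg ee, norm_nonneg dd]
    have hb2 : ⟪f (u (n - 1)), dd⟫ - ⟪f (u n), dd⟫
        ≤ L / 2 * ‖ee‖ ^ 2 + L / 2 * ‖dd‖ ^ 2 := by
      have h1 : ⟪f (u (n - 1)) - f (u n), dd⟫ ≤ ‖f (u (n - 1)) - f (u n)‖ * ‖dd‖ :=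
        real_inner_le_norm _ _
      have h2 : ‖f (u (n - 1)) - f (u n)‖ ≤ L * ‖ee‖ := by
        have := hf (u (n - 1)) (u n)
        rw [← norm_neg (u (n-1) - u n)] at this
        simpa [hee, neg_sub] using this
      have h3 : ⟪f (u (n - 1)) - f (u n), dd⟫ = ⟪f (u (n - 1)), dd⟫ - ⟪f (u n), dd⟫ :=
        inner_sub_left _ _ _
      nlinarith [norm_nonneg dd, norm_nonneg ee, sq_nonneg (‖ee‖ - ‖dd‖),
        mul_le_mul_of_nonneg_right h2 (norm_nonneg dd)]
    have hb3 : β n * ⟪M ee, dd⟫ ≤ 1 / 2 * ⟪M ee, ee⟫ + 1 / 2 * ⟪M dd, dd⟫ := by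
      have hcs := aux_psdCS M hMsa hMpsd ee dd
      have hrhs : 0 ≤ 1 / 2 * ⟪M ee, ee⟫ + 1 / 2 * ⟪M dd, dd⟫ := by
        have := hMpsd ee; have := hMpsd dd; linarith
      rcases le_or_gt 0 (⟪M ee, dd⟫) with hpos | hneg
      · calc β n * ⟪M ee, dd⟫ ≤ 1 * ⟪M ee, dd⟫ :=
            mul_le_mul_of_nonneg_right (hβ n).2.le hpos
          _ ≤ _ := by rw [one_mul]; exact hcs
      · have : β n * ⟪M ee, dd⟫ ≤ 0 := mul_nonpos_of_nonneg_of_nonpos (hβ n).1 hneg.le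
        linarith
    -- descent lemma for F
    have hF' : F (u (n + 1)) ≤ F (u n) + ⟪f (u n), dd⟫ + L / 2 * ‖dd‖ ^ 2 := by
      have := aux_descent F f L hL.le hF hf (u n) dd
      have he : u n + dd = u (n + 1) := by rw [hdd]; abel
      rwa [he] at this
    -- H decrease from optimality
    have hH' : H (u (n + 1)) ≤ H (u n) + ⟪Ξ n, dd⟫ := by
      have := hxi n (u n)
      have he : u n - u (n + 1) = -dd := by rw [hdd]; abel
      rw [he, inner_neg_right] at this
      linarith
    -- expand the A-values
    have hAn1 : av (n + 1) = (H (u (n + 1)) + F (u (n + 1))) + γ * ‖dd‖ ^ 2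
        + L / 2 * ‖dd‖ ^ 2 + 1 / 2 * ⟪M dd, dd⟫ := by
      rw [hav, Nat.add_sub_cancel, hA, ← hdd, hγdef]
    have hAn : av n = (H (u n) + F (u n)) + γ * ‖ee‖ ^ 2
        + L / 2 * ‖ee‖ ^ 2 + 1 / 2 * ⟪M ee, ee⟫ := by
      rw [hav, hA, ← hee, hγdef]
    have hDnd : Dn n = ‖dd‖ := by rw [hDn, hdd]
    have hquad : 0 ≤ (2 * γ - L) * ‖dd‖ ^ 2 :=
      mul_nonneg (by linarith) (sq_nonneg _)
    rw [hAn1, hAn, hDnd]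
    linarith [hΞd, hb1, hb2, hb3, hF', hH']
  -- ### monotonicity and limits of the A-values
  obtain ⟨B, hB⟩ := hEbdd
  have hEa : ∀ n, H (u n) + F (u n) ≤ av n := by
    intro n
    rw [hav, hA]
    have h1 : 0 ≤ 1 / (4 * δt) * ‖u n - u (n - 1)‖ ^ 2 := by positivity
    have h2 : 0 ≤ L / 2 * ‖u n - u (n - 1)‖ ^ 2 := by positivity
    have h3 := hMpsd (u n - u (n - 1))
    linarith
  have havB : ∀ n, B ≤ av n := fun n => le_trans (hB (u n)) (hEa n)
  have hanti : Antitone av := antitone_nat_of_succ_le (fun n => by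
    have := hdec n
    have := mul_nonneg hγ.le (sq_nonneg (Dn n))
    linarith)
  obtain ⟨Ainf, hAinf⟩ : ∃ Ainf, Tendsto av atTop (𝓝 Ainf) :=
    ⟨_, tendsto_atTop_ciInf hanti ⟨B, by rintro x ⟨n, rfl⟩; exact havB n⟩⟩
  have hAinf_le : ∀ n, Ainf ≤ av n := fun n =>
    le_of_tendsto hAinf (eventually_atTop.2 ⟨n, fun m hm => hanti hm⟩)
  have havdiff : Tendsto (fun n => av n - av (n + 1)) atTop (𝓝 0) := by
    have := hAinf.sub (hAinf.comp (tendsto_add_atTop_nat 1))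
    simpa using this
  have hDnsq : Tendsto (fun n => Dn n ^ 2) atTop (𝓝 0) := by
    have hb : Tendsto (fun n => (1 / γ) * (av n - av (n + 1))) atTop (𝓝 0) := by
      simpa using havdiff.const_mul (1 / γ)
    apply squeeze_zero (fun n => sq_nonneg _) (fun n => ?_) hb
    calc Dn n ^ 2 = (1 / γ) * (γ * Dn n ^ 2) := by field_simp
      _ ≤ (1 / γ) * (av n - av (n + 1)) := by
          apply mul_le_mul_of_nonneg_left _ (by positivity)
          linarith [hdec n]
  have hDn_to0 : Tendsto Dn atTop (𝓝 0) := by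
    have h1 : Tendsto (fun n => Real.sqrt (Dn n ^ 2)) atTop (𝓝 (Real.sqrt 0)) :=
      (Real.continuous_sqrt.tendsto 0).comp hDnsq
    have heq : (fun n => Real.sqrt (Dn n ^ 2)) = Dn := funext fun n => by
      rw [Real.sqrt_sq (hDn0 n)]
    rw [heq] at h1
    simpa using h1
  have hsn_to0 : Tendsto sn atTop (𝓝 0) := by
    rw [← tendsto_add_atTop_iff_nat 1]
    have heq : (fun n => sn (n + 1)) = Dn := funext hsn_succ
    rw [heq]; exact hDn_to0
  have he_to0 : Tendsto (fun n => u n - u (n - 1)) atTop (𝓝 0) := by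
    rw [tendsto_zero_iff_norm_tendsto_zero]
    have heq : (fun n => ‖u n - u (n - 1)‖) = sn := funext fun n => (hsn n).symm
    rw [heq]; exact hsn_to0
  have hd_to0 : Tendsto (fun n => u (n + 1) - u n) atTop (𝓝 0) := by
    rw [tendsto_zero_iff_norm_tendsto_zero]
    have heq : (fun n => ‖u (n + 1) - u n‖) = Dn := funext fun n => (hDn n).symm
    rw [heq]; exact hDn_to0
  -- ### bounded iterates, convergent subsequence
  have hmemS : ∀ n, u n ∈ {x : X | H x + F x ≤ av 0} := fun n =>
    le_trans (hEa n) (hanti (Nat.zero_le n))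
  obtain ⟨ub0, -, φ, hφmono, hφconv⟩ := tendsto_subseq_of_bounded (hlev (av 0)) hmemS
  have hφat : Tendsto φ atTop atTop := hφmono.tendsto_atTop
  -- ### criticality template
  have hcrit_of : ∀ σ : ℕ → ℕ, Tendsto σ atTop atTop → ∀ w : X,
      Tendsto (fun k => u (σ k)) atTop (𝓝 w) → ∀ z, H w + ⟪-(f w), z - w⟫ ≤ H z := by
    intro σ hσ w hw' z
    have h1 : Tendsto (fun k => u (σ k + 1)) atTop (𝓝 w) := by
      have heq : (fun k => u (σ k + 1))
          = fun k => (u (σ k)) + (u (σ k + 1) - u (σ k)) := funext fun k => by abel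
      rw [heq]
      simpa using hw'.add (hd_to0.comp hσ)
    have h2 : Tendsto (fun k => u (σ k - 1)) atTop (𝓝 w) := by
      have heq : (fun k => u (σ k - 1))
          = fun k => (u (σ k)) - (u (σ k) - u (σ k - 1)) := funext fun k => by abel
      rw [heq]
      simpa using hw'.sub (he_to0.comp hσ)
    have hβe : Tendsto (fun k => u (σ k + 1) - y (σ k)) atTop (𝓝 0) := by
      have hbound : ∀ k, ‖u (σ k + 1) - y (σ k)‖ ≤ Dn (σ k) + sn (σ k) := by
        intro k
        have heq : u (σ k + 1) - y (σ k)
            = (u (σ k + 1) - u (σ k)) - β (σ k) • (u (σ k) - u (σ k - 1)) := by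
          rw [hy]; module
        rw [heq]
        calc ‖(u (σ k + 1) - u (σ k)) - β (σ k) • (u (σ k) - u (σ k - 1))‖
            ≤ ‖u (σ k + 1) - u (σ k)‖ + ‖β (σ k) • (u (σ k) - u (σ k - 1))‖ := norm_sub_le _ _
          _ ≤ Dn (σ k) + sn (σ k) := by
              rw [hDn, hsn, norm_smul, Real.norm_eq_abs, abs_of_nonneg (hβ (σ k)).1]
              have h3 := (hβ (σ k)).2
              nlinarith [norm_nonneg (u (σ k) - u (σ k - 1))]
      exact squeeze_zero_norm hbound (by simpa using (hDn_to0.comp hσ).add (hsn_to0.comp hσ))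
    have hΞlim : Tendsto (fun k => Ξ (σ k)) atTop (𝓝 (-(f w))) := by
      have hΞexp : (fun k => Ξ (σ k)) = fun k =>
          ((2 * (1 / (4 * δt))) • (u (σ k) - u (σ k - 1)) - f (u (σ k))
            - (f (u (σ k)) - f (u (σ k - 1))))
          - (2 * (3 / (4 * δt))) • (u (σ k + 1) - u (σ k)) - M (u (σ k + 1) - y (σ k)) :=
        funext fun k => by rw [hΞdef, hw]
      rw [hΞexp]
      have l1 : Tendsto (fun k => (2 * (1 / (4 * δt))) • (u (σ k) - u (σ k - 1)))
          atTop (𝓝 0) := by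
        simpa using (he_to0.comp hσ).const_smul (2 * (1 / (4 * δt)))
      have l2 : Tendsto (fun k => f (u (σ k))) atTop (𝓝 (f w)) := (hfc.tendsto w).comp hw'
      have l3 : Tendsto (fun k => f (u (σ k - 1))) atTop (𝓝 (f w)) := (hfc.tendsto w).comp h2
      have l4 : Tendsto (fun k => (2 * (3 / (4 * δt))) • (u (σ k + 1) - u (σ k)))
          atTop (𝓝 0) := by
        simpa using (hd_to0.comp hσ).const_smul (2 * (3 / (4 * δt)))
      have l5 : Tendsto (fun k => M (u (σ k + 1) - y (σ k))) atTop (𝓝 (M 0)) :=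
        (M.continuous.tendsto 0).comp hβe
      have := (((l1.sub l2).sub (l2.sub l3)).sub l4).sub l5
      simpa using this
    have hHlim : Tendsto (fun k => H (u (σ k + 1)) + ⟪Ξ (σ k), z - u (σ k + 1)⟫) atTop
        (𝓝 (H w + ⟪-(f w), z - w⟫)) :=
      ((hHcont.tendsto w).comp h1).add (hΞlim.inner (tendsto_const_nhds.sub h1))
    exact le_of_tendsto hHlim (Filter.Eventually.of_forall fun k => hxi (σ k) z)
  -- ### convergence of A-values along the subsequence
  have h1φ : Tendsto (fun k => u (φ k + 1)) atTop (𝓝 ub0) := by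
    have heq : (fun k => u (φ k + 1))
        = fun k => (u (φ k)) + (u (φ k + 1) - u (φ k)) := funext fun k => by abel
    rw [heq]
    simpa using hφconv.add (hd_to0.comp hφat)
  have hAub : A ub0 ub0 = Ainf := by
    have k1 : Tendsto (fun k => av (φ k + 1)) atTop (𝓝 Ainf) :=
      hAinf.comp ((tendsto_add_atTop_nat 1).comp hφat)
    have hδφ : Tendsto (fun k => u (φ k + 1) - u (φ k)) atTop (𝓝 0) := hd_to0.comp hφat
    have c1 : Tendsto (fun k => H (u (φ k + 1)) + F (u (φ k + 1))) atTop
        (𝓝 (H ub0 + F ub0)) :=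
      ((hHcont.tendsto ub0).comp h1φ).add ((hFc.tendsto ub0).comp h1φ)
    have c3 : Tendsto (fun k => ‖u (φ k + 1) - u (φ k)‖ ^ 2) atTop (𝓝 0) := by
      have := hDnsq.comp hφat
      have heq : ((fun n => Dn n ^ 2) ∘ φ) = fun k => ‖u (φ k + 1) - u (φ k)‖ ^ 2 :=
        funext fun k => by simp [Function.comp, hDn]
      rwa [heq] at this
    have c4 : Tendsto (fun k => ⟪M (u (φ k + 1) - u (φ k)), u (φ k + 1) - u (φ k)⟫) atTop
        (𝓝 0) := by
      have := Filter.Tendsto.inner (𝕜 := ℝ) ((M.continuous.tendsto 0).comp hδφ) hδφ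
      simpa using this
    have k2 : Tendsto (fun k => av (φ k + 1)) atTop (𝓝 (A ub0 ub0)) := by
      have heq : (fun k => av (φ k + 1)) = fun k =>
          (H (u (φ k + 1)) + F (u (φ k + 1)))
          + 1 / (4 * δt) * ‖u (φ k + 1) - u (φ k)‖ ^ 2
          + L / 2 * ‖u (φ k + 1) - u (φ k)‖ ^ 2
          + 1 / 2 * ⟪M (u (φ k + 1) - u (φ k)), u (φ k + 1) - u (φ k)⟫ :=
        funext fun k => by rw [hav, Nat.add_sub_cancel, hA]
      rw [heq]
      have hval : A ub0 ub0 = (H ub0 + F ub0) + 1 / (4 * δt) * 0 + L / 2 * 0 + 1 / 2 * 0 := by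
        rw [hA]; simp
      rw [hval]
      exact ((c1.add (c3.const_mul (1 / (4 * δt)))).add (c3.const_mul (L / 2))).add
        (c4.const_mul (1 / 2))
    exact tendsto_nhds_unique k2 k1
  have hub0crit : ∀ z, H ub0 + ⟪-(f ub0), z - ub0⟫ ≤ H z :=
    hcrit_of φ hφat ub0 hφconv
  have hub0mem : ((0 : X), (0 : X)) ∈ subA ub0 ub0 := by
    rw [hsubA]
    refine ⟨-(f ub0), by rw [hsubH]; exact fun z => hub0crit z, ?_⟩
    have hCM0 : CM (ub0 - ub0) = 0 := by rw [sub_self, hCM]; simp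
    rw [hCM0]
    simp
  -- ### relative error bound
  obtain ⟨b, hbdef⟩ : ∃ b : ℝ, b = 1 / δt + 2 * L + ‖M‖ := ⟨_, rfl⟩
  have hbpos : 0 < b := by
    rw [hbdef]
    have := norm_nonneg M
    have : (0:ℝ) < 1 / δt := by positivity
    linarith [norm_nonneg M]
  have h2γ : 2 * γ ≤ 1 / δt := by
    rw [hγdef, mul_one_div, div_le_div_iff₀ (by positivity) (by positivity)]
    nlinarith
  have hre : ∀ n, Metric.infDist ((0, 0) : X × X) (subA (u (n + 1)) (u n))
      ≤ b * (Dn n + sn n) := by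
    intro n
    obtain ⟨dd, hdd⟩ : ∃ v : X, v = u (n + 1) - u n := ⟨_, rfl⟩
    obtain ⟨ee, hee⟩ : ∃ v : X, v = u n - u (n - 1) := ⟨_, rfl⟩
    have hsy : u (n + 1) - y n = dd - β n • ee := by rw [hy n, hdd, hee]; module
    have hDnd : Dn n = ‖dd‖ := by rw [hDn, hdd]
    have hsnd : sn n = ‖ee‖ := by rw [hsn, hee]
    have hmem : (Ξ n + f (u (n + 1)) + CM (u (n + 1) - u n), -CM (u (n + 1) - u n))
        ∈ subA (u (n + 1)) (u n) := by
      rw [hsubA]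
      exact ⟨Ξ n, by rw [hsubH]; exact fun z => hxi n z, rfl⟩
    have hq1 : Ξ n + f (u (n + 1)) + CM (u (n + 1) - u n)
        = (2 * γ) • ee + (L - 1 / δt) • dd + (f (u (n + 1)) - f (u n))
          + (f (u (n - 1)) - f (u n)) + β n • M ee := by
      rw [hΞdef, hw, hCM, hsy, map_sub, map_smul, ← hdd, ← hee, hγdef]
      module
    have hcmdd : CM (u (n + 1) - u n) = (1 / (2 * δt) + L) • dd + M dd := by
      rw [hCM, ← hdd]
    have hn1 : ‖Ξ n + f (u (n + 1)) + CM (u (n + 1) - u n)‖ ≤ b * (Dn n + sn n) := by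
      obtain ⟨v1, hv1⟩ : ∃ v : X, v = (2 * γ) • ee := ⟨_, rfl⟩
      obtain ⟨v2, hv2⟩ : ∃ v : X, v = (L - 1 / δt) • dd := ⟨_, rfl⟩
      obtain ⟨v3, hv3⟩ : ∃ v : X, v = f (u (n + 1)) - f (u n) := ⟨_, rfl⟩
      obtain ⟨v4, hv4⟩ : ∃ v : X, v = f (u (n - 1)) - f (u n) := ⟨_, rfl⟩
      obtain ⟨v5, hv5⟩ : ∃ v : X, v = β n • M ee := ⟨_, rfl⟩
      rw [hq1, ← hv1, ← hv2, ← hv3, ← hv4, ← hv5]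
      have e1 : ‖v1‖ = 2 * γ * sn n := by
        rw [hv1, norm_smul, Real.norm_eq_abs, abs_of_pos (by linarith), hsnd]
      have e2 : ‖v2‖ ≤ (1 / δt + L) * Dn n := by
        rw [hv2, norm_smul, Real.norm_eq_abs, hDnd]
        apply mul_le_mul_of_nonneg_right _ (norm_nonneg _)
        have h0 : (0:ℝ) < 1 / δt := by positivity
        exact abs_le.mpr ⟨by linarith, by linarith⟩
      have e3 : ‖v3‖ ≤ L * Dn n := by
        rw [hv3, hDnd, hdd]; exact hf _ _
      have e4 : ‖v4‖ ≤ L * sn n := by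
        rw [hv4, hsnd, hee, ← norm_neg (u n - u (n - 1)), neg_sub]; exact hf _ _
      have e5 : ‖v5‖ ≤ ‖M‖ * sn n := by
        rw [hv5, norm_smul, Real.norm_eq_abs, abs_of_nonneg (hβ n).1, hsnd]
        have h1 := M.le_opNorm ee
        have h2 := (hβ n).2
        nlinarith [norm_nonneg (M ee), (hβ n).1, norm_nonneg ee, norm_nonneg M]
      have t1 : ‖v1 + v2 + v3 + v4 + v5‖ ≤ ‖v1 + v2 + v3 + v4‖ + ‖v5‖ := norm_add_le _ _
      have t2 : ‖v1 + v2 + v3 + v4‖ ≤ ‖v1 + v2 + v3‖ + ‖v4‖ := norm_add_le _ _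
      have t3 : ‖v1 + v2 + v3‖ ≤ ‖v1 + v2‖ + ‖v3‖ := norm_add_le _ _
      have t4 : ‖v1 + v2‖ ≤ ‖v1‖ + ‖v2‖ := norm_add_le _ _
      have hfin : 2 * γ * sn n + (1 / δt + L) * Dn n + L * Dn n + L * sn n + ‖M‖ * sn n
          ≤ b * (Dn n + sn n) := by
        rw [hbdef]
        have := hsn0 n; have := hDn0 n
        nlinarith [norm_nonneg M]
      linarith
    have hn2 : ‖CM (u (n + 1) - u n)‖ ≤ b * (Dn n + sn n) := by
      rw [hcmdd]
      have h12 : (0:ℝ) < 1 / (2 * δt) := by positivity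
      have h12' : 1 / (2 * δt) ≤ 1 / δt := by
        rw [div_le_div_iff₀ (by positivity) (by positivity)]; nlinarith
      calc ‖(1 / (2 * δt) + L) • dd + M dd‖
          ≤ ‖(1 / (2 * δt) + L) • dd‖ + ‖M dd‖ := norm_add_le _ _
        _ ≤ (1 / (2 * δt) + L) * Dn n + ‖M‖ * Dn n := by
            rw [norm_smul, Real.norm_eq_abs, abs_of_pos (by linarith), hDnd]
            gcongr
            exact M.le_opNorm dd
        _ ≤ b * (Dn n + sn n) := by
            rw [hbdef]
            have := hsn0 n; have := hDn0 n
            nlinarith [norm_nonneg M]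
    calc Metric.infDist ((0, 0) : X × X) (subA (u (n + 1)) (u n))
        ≤ dist ((0, 0) : X × X)
          (Ξ n + f (u (n + 1)) + CM (u (n + 1) - u n), -CM (u (n + 1) - u n)) :=
        Metric.infDist_le_dist_of_mem hmem
      _ = ‖(Ξ n + f (u (n + 1)) + CM (u (n + 1) - u n), -CM (u (n + 1) - u n))‖ := by
          rw [show ((0, 0) : X × X) = 0 from rfl, dist_zero_left]
      _ ≤ b * (Dn n + sn n) := by
          rw [Prod.norm_def]
          simp only [norm_neg]
          exact max_le hn1 hn2
  -- ### final assembly helper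
  have hfinish : Summable Dn → Summable (fun n : ℕ => ‖u (n + 1) - u n‖)
      ∧ ∃ ub : X, Tendsto u atTop (𝓝 ub) ∧ ∀ z : X, H ub + ⟪-(f ub), z - ub⟫ ≤ H z := by
    intro hsumm
    have heqD : (fun n : ℕ => ‖u (n + 1) - u n‖) = Dn := funext fun n => (hDn n).symm
    have hsummv : Summable (fun n => u (n + 1) - u n) := by
      apply Summable.of_norm
      rw [heqD]; exact hsumm
    obtain ⟨S, hS⟩ := hsummv
    have hu : Tendsto u atTop (𝓝 (u 0 + S)) := by
      have h1 := hS.tendsto_sum_nat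
      have heq : (fun n => u 0 + ∑ i ∈ Finset.range n, (u (i + 1) - u i)) = u :=
        funext fun n => by rw [Finset.sum_range_sub]; abel
      have h2 : Tendsto (fun n => u 0 + ∑ i ∈ Finset.range n, (u (i + 1) - u i)) atTop
          (𝓝 (u 0 + S)) := tendsto_const_nhds.add h1
      rwa [heq] at h2
    exact ⟨by rw [heqD]; exact hsumm, u 0 + S, hu,
      hcrit_of id tendsto_id (u 0 + S) hu⟩
  -- ### case analysis
  by_cases hcase : ∀ n, Ainf < av n
  · -- ### KL case
    obtain ⟨ν, hν, O, hOopen, hOmem, ψ, ψ', hψcont, hψ0, hψconc, hψd, hKLineq⟩ :=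
      hKL ub0 ub0 hub0mem
    rw [hAub] at hKLineq
    have hψmono : StrictMonoOn ψ (Set.Ico 0 ν) := by
      apply strictMonoOn_of_deriv_pos (convex_Ico 0 ν) hψcont
      intro s hs
      rw [interior_Ico] at hs
      rw [(hψd s hs).1.deriv]
      exact (hψd s hs).2
    have hψnn : ∀ x, x ∈ Set.Ico 0 ν → 0 ≤ ψ x := by
      intro x hx
      rcases eq_or_lt_of_le hx.1 with h | h
      · rw [← h, hψ0]
      · have := hψmono ⟨le_refl 0, hν⟩ hx h
        rw [hψ0] at this; exact this.le
    obtain ⟨tv, htv⟩ : ∃ tv : ℕ → ℝ, ∀ n, tv n = av n - Ainf := ⟨_, fun _ => rfl⟩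
    have htvpos : ∀ n, 0 < tv n := fun n => by rw [htv]; linarith [hcase n]
    have htv0 : Tendsto tv atTop (𝓝 0) := by
      have h1 : Tendsto (fun n => av n - Ainf) atTop (𝓝 (Ainf - Ainf)) :=
        hAinf.sub tendsto_const_nhds
      have heq : (fun n => av n - Ainf) = tv := funext fun n => (htv n).symm
      rw [heq] at h1
      simpa using h1
    have htvanti : ∀ m n : ℕ, m ≤ n → tv n ≤ tv m := fun m n h => by
      rw [htv, htv]; linarith [hanti h]
    obtain ⟨ρ, hρpos, hρsub⟩ := Metric.isOpen_iff.1 hOopen _ hOmem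
    -- choose the starting index N
    have hq0 : Tendsto (fun j => ‖u (φ j) - ub0‖ + (2 * (b / γ) * ψ (tv (φ j + 1))
        + 2 * Dn (φ j) + sn (φ j) / 2)) atTop (𝓝 0) := by
      have l1 : Tendsto (fun j => ‖u (φ j) - ub0‖) atTop (𝓝 0) := by
        have := (hφconv.sub (tendsto_const_nhds (x := ub0))).norm
        simpa using this
      have htvφ : Tendsto (fun j => tv (φ j + 1)) atTop (𝓝 0) :=
        htv0.comp ((tendsto_add_atTop_nat 1).comp hφat)
      have l2 : Tendsto (fun j => ψ (tv (φ j + 1))) atTop (𝓝 0) := by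
        have hcw : ContinuousWithinAt ψ (Set.Ico 0 ν) 0 := hψcont 0 ⟨le_refl 0, hν⟩
        have hmem_ev : ∀ᶠ j in atTop, tv (φ j + 1) ∈ Set.Ico 0 ν := by
          filter_upwards [htvφ.eventually_lt_const hν] with j hj
          exact ⟨(htvpos _).le, hj⟩
        have := hcw.tendsto.comp (tendsto_nhdsWithin_iff.2 ⟨htvφ, hmem_ev⟩)
        rw [hψ0] at this
        exact this
      have l3 : Tendsto (fun j => Dn (φ j)) atTop (𝓝 0) := hDn_to0.comp hφat
      have l4 : Tendsto (fun j => sn (φ j)) atTop (𝓝 0) := hsn_to0.comp hφat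
      have := l1.add (((l2.const_mul (2 * (b / γ))).add (l3.const_mul 2)).add
        (l4.div_const 2))
      simpa using this
    have hNν : ∀ᶠ j in atTop, tv (φ j) < ν := (htv0.comp hφat).eventually_lt_const hν
    obtain ⟨j, hj1, hj2⟩ := ((hq0.eventually_lt_const hρpos).and hNν).exists
    obtain ⟨N, hNdef⟩ : ∃ N : ℕ, N = φ j := ⟨_, rfl⟩
    rw [← hNdef] at hj1 hj2
    -- the one-step estimate
    have hstep : ∀ k, N ≤ k → ‖u k - ub0‖ < ρ → ‖u (k + 1) - ub0‖ < ρ →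
        Dn (k + 1) ≤ (b / γ) * (ψ (tv (k + 1)) - ψ (tv (k + 2))) + (Dn k + sn k) / 4 := by
      intro k hk h1 h2
      have hk1 : N ≤ k + 1 := le_trans hk (Nat.le_succ k)
      have htk1ν : tv (k + 1) < ν := lt_of_le_of_lt (htvanti N (k + 1) hk1) hj2
      have htk1 : tv (k + 1) ∈ Set.Ioo 0 ν := ⟨htvpos _, htk1ν⟩
      have htk2 : tv (k + 2) ∈ Set.Ico 0 ν :=
        ⟨(htvpos _).le, lt_of_le_of_lt (htvanti (k + 1) (k + 2) (Nat.le_succ _)) htk1ν⟩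
      have hOmem' : (u (k + 1), u k) ∈ O := by
        apply hρsub
        rw [Metric.mem_ball, Prod.dist_eq]
        apply max_lt
        · rw [dist_eq_norm]; exact h2
        · rw [dist_eq_norm]; exact h1
      have hAval : A (u (k + 1)) (u k) = av (k + 1) := by
        rw [hav, Nat.add_sub_cancel]
      have hkl := hKLineq (u (k + 1)) (u k) hOmem'
        (by rw [hAval]; linarith [hcase (k + 1)])
        (by rw [hAval]; have := htv (k + 1); linarith)
      rw [hAval, show av (k + 1) - Ainf = tv (k + 1) from by rw [htv]] at hkl
      have hψ'pos : 0 < ψ' (tv (k + 1)) := (hψd _ htk1).2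
      have hX := hre k
      have hXnn : 0 ≤ b * (Dn k + sn k) :=
        mul_nonneg hbpos.le (by linarith [hDn0 k, hsn0 k])
      have h1' : 1 ≤ ψ' (tv (k + 1)) * (b * (Dn k + sn k)) :=
        le_trans hkl (mul_le_mul_of_nonneg_left hX hψ'pos.le)
      have htang := aux_concave_tangent ν ψ hψconc htk1 (hψd _ htk1).1 htk2
      have hdecr : γ * Dn (k + 1) ^ 2 ≤ tv (k + 1) - tv (k + 2) := by
        rw [htv, htv]; linarith [hdec (k + 1)]
      have h2' : ψ' (tv (k + 1)) * (γ * Dn (k + 1) ^ 2)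
          ≤ ψ (tv (k + 1)) - ψ (tv (k + 2)) := by
        nlinarith [mul_le_mul_of_nonneg_left hdecr hψ'pos.le]
      have hnn : 0 ≤ γ * Dn (k + 1) ^ 2 := mul_nonneg hγ.le (sq_nonneg _)
      have key : γ * Dn (k + 1) ^ 2
          ≤ (ψ (tv (k + 1)) - ψ (tv (k + 2))) * (b * (Dn k + sn k)) := by
        calc γ * Dn (k + 1) ^ 2 = γ * Dn (k + 1) ^ 2 * 1 := by ring
          _ ≤ γ * Dn (k + 1) ^ 2 * (ψ' (tv (k + 1)) * (b * (Dn k + sn k))) :=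
              mul_le_mul_of_nonneg_left h1' hnn
          _ = (ψ' (tv (k + 1)) * (γ * Dn (k + 1) ^ 2)) * (b * (Dn k + sn k)) := by ring
          _ ≤ (ψ (tv (k + 1)) - ψ (tv (k + 2))) * (b * (Dn k + sn k)) :=
              mul_le_mul_of_nonneg_right h2' hXnn
      have hΔnn : 0 ≤ ψ (tv (k + 1)) - ψ (tv (k + 2)) :=
        le_trans (mul_nonneg hψ'pos.le hnn) h2'
      have hsq : Dn (k + 1) ^ 2
          ≤ (2 * (b / γ) * (ψ (tv (k + 1)) - ψ (tv (k + 2)))) * ((Dn k + sn k) / 2) := by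
        have h3' := mul_le_mul_of_nonneg_left key
          (le_of_lt (show (0:ℝ) < 1 / γ by positivity))
        calc Dn (k + 1) ^ 2 = (1 / γ) * (γ * Dn (k + 1) ^ 2) := by field_simp
          _ ≤ (1 / γ) * ((ψ (tv (k + 1)) - ψ (tv (k + 2))) * (b * (Dn k + sn k))) := h3'
          _ = (2 * (b / γ) * (ψ (tv (k + 1)) - ψ (tv (k + 2)))) * ((Dn k + sn k) / 2) := by
              field_simp
      have ham := aux_am_gm (hDn0 (k + 1))
        (mul_nonneg (by positivity : (0:ℝ) ≤ 2 * (b / γ)) hΔnn)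
        (by linarith [hDn0 k, hsn0 k] : (0:ℝ) ≤ (Dn k + sn k) / 2) hsq
      linarith
    -- sums of step lengths
    obtain ⟨T, hT⟩ : ∃ T : ℕ → ℝ, ∀ m, T m = ∑ i ∈ Finset.range m, Dn (N + i) :=
      ⟨_, fun _ => rfl⟩
    obtain ⟨TT, hTT⟩ : ∃ TT : ℝ,
        TT = 2 * (b / γ) * ψ (tv (N + 1)) + 2 * Dn N + sn N / 2 := ⟨_, rfl⟩
    have hNballTT : ‖u N - ub0‖ + TT < ρ := by rw [hTT]; linarith
    have htvN1 : tv (N + 1) ∈ Set.Ico 0 ν :=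
      ⟨(htvpos _).le, lt_of_le_of_lt (htvanti N (N + 1) (Nat.le_succ _)) hj2⟩
    have hTT0 : 0 ≤ TT := by
      rw [hTT]
      have := hψnn _ htvN1
      have : 0 ≤ 2 * (b / γ) * ψ (tv (N + 1)) := by positivity
      linarith [hDn0 N, hsn0 N]
    have hTmono : ∀ m m' : ℕ, m ≤ m' → T m ≤ T m' := by
      intro m m' h
      rw [hT, hT]
      apply Finset.sum_le_sum_of_subset_of_nonneg (Finset.range_subset_range.2 h)
      exact fun i _ _ => hDn0 _
    have hTnn : ∀ m, 0 ≤ T m := fun m => by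
      rw [hT]; exact Finset.sum_nonneg fun i _ => hDn0 _
    have hpos : ∀ k, ‖u (N + k) - ub0‖ ≤ ‖u N - ub0‖ + T k := by
      intro k
      induction k with
      | zero => rw [hT]; simp
      | succ k ih =>
        have heq : u (N + (k + 1)) - ub0
            = (u ((N + k) + 1) - u (N + k)) + (u (N + k) - ub0) := by abel
        have h1 := norm_add_le (u ((N + k) + 1) - u (N + k)) (u (N + k) - ub0)
        rw [← heq] at h1
        have hTk : T (k + 1) = T k + Dn (N + k) := by
          rw [hT, hT, Finset.sum_range_succ]
        rw [hTk]
        have := hDn (N + k)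
        linarith [h1, ih]
    have hsum_s : ∀ m, ∑ i ∈ Finset.range m, sn (N + i) ≤ sn N + T m := by
      intro m
      cases m with
      | zero => rw [hT]; simp [hsn0 N]
      | succ mm =>
        rw [Finset.sum_range_succ']
        have heq : ∀ i, sn (N + (i + 1)) = Dn (N + i) := fun i => hsn_succ (N + i)
        rw [Finset.sum_congr rfl (fun i _ => heq i)]
        have h1 : ∑ i ∈ Finset.range mm, Dn (N + i) = T mm := (hT mm).symm
        rw [h1, Nat.add_zero]
        linarith [hTmono mm (mm + 1) (Nat.le_succ mm)]
    have hC : ∀ m, T (m + 1) ≤ Dn N + (b / γ) * (ψ (tv (N + 1)) - ψ (tv (N + m + 1)))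
        + (1 / 4) * (∑ i ∈ Finset.range m, (Dn (N + i) + sn (N + i)))
        → T (m + 1) ≤ TT := by
      intro m h
      have hs := hsum_s m
      have hsplit : ∑ i ∈ Finset.range m, (Dn (N + i) + sn (N + i))
          = T m + ∑ i ∈ Finset.range m, sn (N + i) := by
        rw [hT, Finset.sum_add_distrib]
      have hTm : T m ≤ T (m + 1) := hTmono m (m + 1) (Nat.le_succ m)
      have hmem : tv (N + m + 1) ∈ Set.Ico 0 ν :=
        ⟨(htvpos _).le, lt_of_le_of_lt (htvanti N (N + m + 1) (by omega)) hj2⟩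
      have hψnn' : 0 ≤ ψ (tv (N + m + 1)) := hψnn _ hmem
      have hKnn : (0:ℝ) ≤ b / γ := by positivity
      have hexp : (b / γ) * (ψ (tv (N + 1)) - ψ (tv (N + m + 1)))
          = (b / γ) * ψ (tv (N + 1)) - (b / γ) * ψ (tv (N + m + 1)) := by ring
      have hKψ : 0 ≤ (b / γ) * ψ (tv (N + m + 1)) := mul_nonneg hKnn hψnn'
      rw [hTT]
      linarith
    have hmain : ∀ m, T (m + 1) ≤ Dn N + (b / γ) * (ψ (tv (N + 1)) - ψ (tv (N + m + 1)))
        + (1 / 4) * (∑ i ∈ Finset.range m, (Dn (N + i) + sn (N + i))) := by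
      intro m
      induction m with
      | zero =>
        have h1 : T 1 = Dn N := by rw [hT]; simp
        rw [h1]
        simp
      | succ m ih =>
        have hTTm := hC m ih
        have hp1 : ‖u (N + m) - ub0‖ < ρ := by
          have h1 := hpos m
          have h2 : T m ≤ TT := le_trans (hTmono m (m + 1) (Nat.le_succ m)) hTTm
          linarith
        have hp2 : ‖u (N + m + 1) - ub0‖ < ρ := by
          have h1 := hpos (m + 1)
          rw [show N + (m + 1) = N + m + 1 from by omega] at h1
          linarith
        have hst := hstep (N + m) (Nat.le_add_right N m) hp1 hp2
        have hTk : T (m + 2) = T (m + 1) + Dn (N + (m + 1)) := by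
          rw [hT, hT, Finset.sum_range_succ]
        have hsplit : ∑ i ∈ Finset.range (m + 1), (Dn (N + i) + sn (N + i))
            = (∑ i ∈ Finset.range m, (Dn (N + i) + sn (N + i)))
              + (Dn (N + m) + sn (N + m)) := Finset.sum_range_succ _ _
        have htel : (b / γ) * (ψ (tv (N + 1)) - ψ (tv (N + m + 1)))
            + (b / γ) * (ψ (tv (N + m + 1)) - ψ (tv (N + m + 2)))
            = (b / γ) * (ψ (tv (N + 1)) - ψ (tv (N + m + 2))) := by ring
        have hidx : Dn (N + (m + 1)) = Dn (N + m + 1) := by rw [Nat.add_assoc]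
        rw [hTk, hsplit, hidx]
        have hidx2 : tv (N + (m + 1) + 1) = tv (N + m + 2) := by
          rw [show N + (m + 1) + 1 = N + m + 2 by omega]
        rw [hidx2]
        linarith
    -- summability
    apply hfinish
    apply summable_of_sum_range_le (c := (∑ i ∈ Finset.range N, Dn i) + TT) hDn0
    intro n
    rcases le_or_gt n N with h | h
    · have h1 : ∑ i ∈ Finset.range n, Dn i ≤ ∑ i ∈ Finset.range N, Dn i :=
        Finset.sum_le_sum_of_subset_of_nonneg (Finset.range_subset_range.2 h)
          (fun i _ _ => hDn0 i)
      linarith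
    · obtain ⟨m, rfl⟩ : ∃ m, n = N + m := ⟨n - N, by omega⟩
      rw [Finset.sum_range_add]
      have hTb : T m ≤ TT := by
        cases m with
        | zero => rw [hT]; simpa using hTT0
        | succ mm => exact hC mm (hmain mm)
      have hTm : ∑ i ∈ Finset.range m, Dn (N + i) = T m := (hT m).symm
      linarith
  · -- the A-values reach their limit: the sequence is eventually constant
    push_neg at hcase
    obtain ⟨N, hN⟩ := hcase
    apply hfinish
    apply summable_of_ne_finset_zero (s := Finset.range N)
    intro n hn
    rw [Finset.mem_range, not_lt] at hn
    have hconst : av n = Ainf ∧ av (n + 1) = Ainf := by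
      have h1 : av n ≤ av N := hanti hn
      have h2 : av (n + 1) ≤ av N := hanti (le_trans hn (Nat.le_succ n))
      have h3 := hAinf_le n
      have h4 := hAinf_le (n + 1)
      constructor <;> linarith
    have h5 := hdec n
    rw [hconst.1, hconst.2] at h5
    have h6 : γ * Dn n ^ 2 ≤ 0 := by linarith
    have h7 : Dn n ^ 2 ≤ 0 := by nlinarith
    have := sq_nonneg (Dn n)
    have h8 : Dn n ^ 2 = 0 := le_antisymm h7 this
    exact pow_eq_zero_iff (by norm_num) |>.mp h8
end
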